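/- arXiv:2009.14794 — 2 statements merged into one kernel-verified Lean document; each statement's English description precedes it below -/
import Mathlib

section
/- For any vectors x, y in R^d, exp(x^T y) = E_{ω ~ N(0, I_d)}[exp(ω^T x - ||x||²/2) · exp(ω^T y - ||y||²/2)]. -/
/-! The integrand factors as `exp (ωᵀ(x + y))` times a constant, so the expectation is the
moment generating function of the standard Gaussian at `x + y`, namely `exp (‖x + y‖² / 2)`;
the constant cancels `‖x‖²` and `‖y‖²` and leaves `exp (xᵀy)`. -/

open MeasureTheory ProbabilityTheory

noncomputable def stdGaussian (d : ℕ) : Measure (Fin d → ℝ) :=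
  Measure.pi fun _ => gaussianReal 0 1

theorem integral_exp_mul_gaussianReal (μ : ℝ) (v : NNReal) (t : ℝ) :
    ∫ w, Real.exp (t * w) ∂gaussianReal μ v = Real.exp (μ * t + v * t ^ 2 / 2) :=
  congrFun mgf_id_gaussianReal t

-- `_root_` because Mathlib's `ProbabilityTheory.stdGaussian` is also in scope.
theorem integral_exp_sum_mul_stdGaussian (d : ℕ) (v : Fin d → ℝ) :
    ∫ ω, Real.exp (∑ i, v i * ω i) ∂_root_.stdGaussian d = Real.exp ((∑ i, v i ^ 2) / 2) := by
  simp_rw [Real.exp_sum, _root_.stdGaussian,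
    integral_fintype_prod_eq_prod (fun i w => Real.exp (v i * w)),
    integral_exp_mul_gaussianReal, Finset.sum_div, Real.exp_sum]
  simp only [NNReal.coe_one, zero_mul, one_mul, zero_add]

/-- For any `x y : ℝ^d`,
`exp(xᵀy) = E_{ω ~ N(0, I_d)}[exp(ωᵀx - ‖x‖²/2) ⬝ exp(ωᵀy - ‖y‖²/2)]`. -/
theorem softmax_positive_random_features (d : ℕ) (x y : Fin d → ℝ) :
    Real.exp (∑ i, x i * y i) =
      ∫ ω, Real.exp ((∑ i, ω i * x i) - (∑ i, x i ^ 2) / 2) *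
             Real.exp ((∑ i, ω i * y i) - (∑ i, y i ^ 2) / 2) ∂(stdGaussian d) := by
  have integrand (ω : Fin d → ℝ) :
      Real.exp ((∑ i, ω i * x i) - (∑ i, x i ^ 2) / 2) *
          Real.exp ((∑ i, ω i * y i) - (∑ i, y i ^ 2) / 2) =
        Real.exp (∑ i, (x i + y i) * ω i) *
          Real.exp (-((∑ i, x i ^ 2) + ∑ i, y i ^ 2) / 2) := by
    rw [← Real.exp_add, ← Real.exp_add]
    congr 1
    simp only [add_mul, Finset.sum_add_distrib, mul_comm (ω _)]
    ring
  have norm_sq_add : ∑ i, (x i + y i) ^ 2 =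
      (∑ i, x i ^ 2) + 2 * (∑ i, x i * y i) + ∑ i, y i ^ 2 := by
    simp only [add_sq, Finset.sum_add_distrib, Finset.mul_sum, mul_assoc]
  simp_rw [integrand]
  rw [integral_mul_const, integral_exp_sum_mul_stdGaussian, ← Real.exp_add, norm_sq_add]
  congr 1
  ring
end

section
/- Let μ_d(j) denote the j-th moment of the chi distribution with d degrees of freedom, i.e. μ_d(j) = E[||g||^j] for g ~ N(0, I_d). If d_1, ..., d_m are even nonnegative integers with at least two distinct indices i ≠ j satisfying d_i, d_j > 0, then (∏_{i=1}^m μ_d(d_i)) / μ_d(∑_i d_i) ≤ d/(d+2). -/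
/-!
In polar coordinates the `j`-th moment of `‖g‖` is `K_d ∫₀^∞ r^(d-1+j) e^(-r²/2) dr`, a Gamma
value up to a constant independent of `j`; hence `μ_d(j+2) = (d+j) μ_d(j)` and
`μ_d(2k) = d(d+2)⋯(d+2k-2)`. Since `μ_d(2a+2b) = μ_d(2a) · (d+2a)(d+2a+2)⋯(d+2a+2b-2)` dominates
`μ_d(2a) μ_d(2b)` factor by factor, the even moments are supermultiplicative, and when `a, b ≥ 1`
the leading factors `d + 2a ≥ d + 2` versus `d` yield the extra factor `d/(d+2)`.
-/

open MeasureTheory ProbabilityTheory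

open Real Set
open scoped ENNReal

namespace MeasureTheory

theorem lintegral_fin_nat_prod_eq_prod {α : Type*} [MeasurableSpace α] {n : ℕ}
    {μ : Fin n → Measure α} [∀ i, SigmaFinite (μ i)] {f : Fin n → α → ℝ≥0∞}
    (hf : ∀ i, Measurable (f i)) :
    ∫⁻ x, ∏ i, f i (x i) ∂Measure.pi μ = ∏ i, ∫⁻ x, f i x ∂μ i := by
  induction n with
  | zero => simp
  | succ n ih =>
    calc
      _ = ∫⁻ x : α × (Fin n → α), f 0 x.1 * ∏ i : Fin n, f i.succ (x.2 i)
            ∂(μ 0).prod (Measure.pi fun i => μ i.succ) := by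
        rw [← ((measurePreserving_piFinSuccAbove μ 0).symm).lintegral_comp_emb
          (MeasurableEquiv.measurableEmbedding _)]
        simp_rw [MeasurableEquiv.piFinSuccAbove_symm_apply, Fin.insertNthEquiv,
          Fin.prod_univ_succ, Fin.insertNth_zero, Equiv.coe_fn_mk, Fin.cons_succ,
          Fin.zero_succAbove, cast_eq, Fin.cons_zero]
      _ = (∫⁻ x, f 0 x ∂μ 0) * ∏ i : Fin n, ∫⁻ x, f i.succ x ∂μ i.succ := by
        have hprod : Measurable fun x : Fin n → α => ∏ i, f i.succ (x i) :=
          Finset.measurable_prod _ fun i _ => (hf i.succ).comp (measurable_pi_apply i)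
        rw [← ih fun i => hf i.succ, ← lintegral_prod_mul (hf 0).aemeasurable hprod.aemeasurable]
      _ = ∏ i, ∫⁻ x, f i x ∂μ i := by rw [Fin.prod_univ_succ]

theorem Measure.pi_withDensity {α : Type*} [MeasurableSpace α] {n : ℕ}
    {μ : Fin n → Measure α} [∀ i, SigmaFinite (μ i)] {f : Fin n → α → ℝ≥0∞}
    (hf : ∀ i, Measurable (f i)) [∀ i, SigmaFinite ((μ i).withDensity (f i))] :
    Measure.pi (fun i => (μ i).withDensity (f i)) =
      (Measure.pi μ).withDensity fun x => ∏ i, f i (x i) := by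
  refine Measure.pi_eq fun s hs => ?_
  rw [withDensity_apply _ (MeasurableSet.univ_pi hs), Measure.restrict_pi_pi,
    lintegral_fin_nat_prod_eq_prod hf]
  exact Finset.prod_congr rfl fun i _ => (withDensity_apply _ (hs i)).symm

end MeasureTheory

theorem stdGaussian_eq_withDensity (d : ℕ) :
    stdGaussian d = volume.withDensity fun x => ∏ i, gaussianPDF 0 1 (x i) := by
  have : SigmaFinite (volume.withDensity (gaussianPDF 0 1)) := SigmaFinite.withDensity_ofReal _
  rw [_root_.stdGaussian, gaussianReal_of_var_ne_zero 0 one_ne_zero]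
  exact Measure.pi_withDensity fun _ => measurable_gaussianPDF 0 1

theorem integral_stdGaussian_eq_integral_mul (d : ℕ) (F : (Fin d → ℝ) → ℝ) :
    ∫ x, F x ∂stdGaussian d = ∫ x, (∏ i, gaussianPDFReal 0 1 (x i)) * F x := by
  rw [stdGaussian_eq_withDensity, integral_withDensity_eq_integral_toReal_smul
    (by fun_prop : Measurable fun x : Fin d → ℝ => ∏ i, gaussianPDF 0 1 (x i))
    (ae_of_all _ fun x => ENNReal.prod_lt_top fun i _ => ENNReal.ofReal_lt_top)]
  simp only [ENNReal.toReal_prod, gaussianPDF,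
    ENNReal.toReal_ofReal (gaussianPDFReal_nonneg _ _ _), smul_eq_mul]

theorem prod_gaussianPDFReal {d : ℕ} (x : Fin d → ℝ) :
    ∏ i, gaussianPDFReal 0 1 (x i) = (√(2 * π))⁻¹ ^ d * exp (-(∑ i, x i ^ 2) / 2) := by
  simp only [gaussianPDFReal, NNReal.coe_one, mul_one, sub_zero, Finset.prod_mul_distrib,
    Finset.prod_const, Finset.card_univ, Fintype.card_fin, ← exp_sum, Finset.sum_div,
    Finset.sum_neg_distrib, neg_div]

theorem integral_stdGaussian_radial (d : ℕ) (f : ℝ → ℝ) :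
    ∫ x, f √(∑ i, x i ^ 2) ∂stdGaussian d =
      ∫ y : EuclideanSpace ℝ (Fin d), (√(2 * π))⁻¹ ^ d * exp (-‖y‖ ^ 2 / 2) * f ‖y‖ := by
  rw [integral_stdGaussian_eq_integral_mul,
    ← (EuclideanSpace.volume_preserving_symm_measurableEquiv_toLp (Fin d)).integral_comp']
  refine integral_congr_ae (ae_of_all _ fun y => ?_)
  dsimp only
  rw [prod_gaussianPDFReal, EuclideanSpace.real_norm_sq_eq, EuclideanSpace.norm_eq]
  simp only [Real.norm_eq_abs, sq_abs]
  rfl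

theorem integral_Ioi_pow_mul_exp_neg_sq_div_two (n : ℕ) :
    ∫ r in Ioi (0 : ℝ), r ^ n * exp (-r ^ 2 / 2) = √2 ^ (n + 1) / 2 * Gamma ((n + 1) / 2) := by
  have h := integral_rpow_mul_exp_neg_mul_rpow (p := 2) (q := n) (b := 1 / 2) two_pos
    (by linarith [(n.cast_nonneg : (0 : ℝ) ≤ n)]) one_half_pos
  have hpow : (1 / 2 : ℝ) ^ (-((n : ℝ) + 1) / 2) = √2 ^ (n + 1) := by
    rw [sqrt_eq_rpow, ← rpow_natCast, ← rpow_mul zero_le_two, one_div, inv_rpow zero_le_two,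
      ← rpow_neg zero_le_two]
    push_cast
    ring_nf
  rw [hpow] at h
  rw [div_eq_mul_one_div (√2 ^ (n + 1)) 2, ← h]
  refine setIntegral_congr_fun measurableSet_Ioi fun r _ => ?_
  simp only [rpow_natCast, rpow_two]
  ring_nf

theorem integral_Ioi_pow_add_two_mul_exp_neg_sq_div_two (n : ℕ) :
    ∫ r in Ioi (0 : ℝ), r ^ (n + 2) * exp (-r ^ 2 / 2) =
      (n + 1) * ∫ r in Ioi (0 : ℝ), r ^ n * exp (-r ^ 2 / 2) := by
  have hΓ : Gamma ((((n + 2 : ℕ) : ℝ) + 1) / 2) = (n + 1) / 2 * Gamma ((n + 1) / 2) := by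
    rw [← Gamma_add_one (by positivity)]
    push_cast
    ring_nf
  rw [integral_Ioi_pow_mul_exp_neg_sq_div_two, integral_Ioi_pow_mul_exp_neg_sq_div_two, hΓ,
    show n + 2 + 1 = n + 1 + 2 by ring, pow_add, sq_sqrt zero_le_two]
  ring

instance (d : ℕ) : IsProbabilityMeasure (stdGaussian d) := by
  unfold _root_.stdGaussian
  infer_instance

noncomputable def chiMoment (d j : ℕ) : ℝ :=
  ∫ x, √(∑ i, x i ^ 2) ^ j ∂stdGaussian d

theorem exists_chiMoment_eq_mul_integral {d : ℕ} (hd : d ≠ 0) :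
    ∃ K : ℝ, ∀ j : ℕ,
      chiMoment d j = K * ∫ r in Ioi (0 : ℝ), r ^ (d - 1 + j) * exp (-r ^ 2 / 2) := by
  have : Nontrivial (EuclideanSpace ℝ (Fin d)) :=
    Module.nontrivial_of_finrank_pos (R := ℝ) (by rw [finrank_euclideanSpace_fin]; omega)
  refine ⟨d * volume.real (Metric.ball (0 : EuclideanSpace ℝ (Fin d)) 1) * (√(2 * π))⁻¹ ^ d,
    fun j => ?_⟩
  rw [chiMoment, integral_stdGaussian_radial d (· ^ j),
    integral_fun_norm_addHaar volume fun r => (√(2 * π))⁻¹ ^ d * exp (-r ^ 2 / 2) * r ^ j,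
    finrank_euclideanSpace_fin, nsmul_eq_mul, smul_eq_mul]
  simp only [← integral_const_mul]
  congr 1 with r
  rw [smul_eq_mul, pow_add]
  ring

theorem chiMoment_zero_left (j : ℕ) : chiMoment 0 j = 0 ^ j := by
  simp [chiMoment]

theorem chiMoment_add_two (d j : ℕ) : chiMoment d (j + 2) = (d + j) * chiMoment d j := by
  rcases eq_or_ne d 0 with rfl | hd
  · rcases j with _ | j <;> simp [chiMoment_zero_left]
  obtain ⟨K, hK⟩ := exists_chiMoment_eq_mul_integral hd
  rw [hK, hK, ← add_assoc, integral_Ioi_pow_add_two_mul_exp_neg_sq_div_two]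
  push_cast [Nat.cast_sub (Nat.one_le_iff_ne_zero.2 hd)]
  ring

def twoStepAscFactorial (d k : ℕ) : ℕ :=
  ∏ t ∈ Finset.range k, (d + 2 * t)

theorem twoStepAscFactorial_succ' (d k : ℕ) :
    twoStepAscFactorial d (k + 1) = d * twoStepAscFactorial (d + 2) k := by
  simp only [twoStepAscFactorial, Finset.prod_range_succ', mul_zero, add_zero, mul_comm d]
  congr 1
  exact Finset.prod_congr rfl fun t _ => by ring

theorem twoStepAscFactorial_add (d a b : ℕ) :
    twoStepAscFactorial d (a + b) =
      twoStepAscFactorial d a * twoStepAscFactorial (d + 2 * a) b := by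
  simp only [twoStepAscFactorial, Finset.prod_range_add]
  congr 1
  exact Finset.prod_congr rfl fun t _ => by ring

theorem twoStepAscFactorial_mono_left {d d' : ℕ} (h : d ≤ d') (k : ℕ) :
    twoStepAscFactorial d k ≤ twoStepAscFactorial d' k :=
  Finset.prod_le_prod' fun t _ => by omega

theorem twoStepAscFactorial_mul_le (d a b : ℕ) :
    twoStepAscFactorial d a * twoStepAscFactorial d b ≤ twoStepAscFactorial d (a + b) := by
  rw [twoStepAscFactorial_add]
  exact Nat.mul_le_mul_left _ (twoStepAscFactorial_mono_left (by omega) b)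

theorem prod_twoStepAscFactorial_le {ι : Type*} (d : ℕ) (s : Finset ι) (c : ι → ℕ) :
    ∏ t ∈ s, twoStepAscFactorial d (c t) ≤ twoStepAscFactorial d (∑ t ∈ s, c t) := by
  classical
  induction s using Finset.induction with
  | empty => simp [twoStepAscFactorial]
  | insert t s ht ih =>
    rw [Finset.prod_insert ht, Finset.sum_insert ht]
    exact (Nat.mul_le_mul_left _ ih).trans (twoStepAscFactorial_mul_le _ _ _)

theorem add_two_mul_twoStepAscFactorial_mul_le (d : ℕ) {a b : ℕ} (ha : 0 < a) (hb : 0 < b) :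
    (d + 2) * (twoStepAscFactorial d a * twoStepAscFactorial d b) ≤
      d * twoStepAscFactorial d (a + b) := by
  obtain ⟨b, rfl⟩ : ∃ b', b = b' + 1 := ⟨b - 1, by omega⟩
  rw [twoStepAscFactorial_add d a, twoStepAscFactorial_succ' d,
    twoStepAscFactorial_succ' (d + 2 * a)]
  calc (d + 2) * (twoStepAscFactorial d a * (d * twoStepAscFactorial (d + 2) b))
      = d * (twoStepAscFactorial d a * ((d + 2) * twoStepAscFactorial (d + 2) b)) := by ring
    _ ≤ d * (twoStepAscFactorial d a *
          ((d + 2 * a) * twoStepAscFactorial (d + 2 * a + 2) b)) := by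
      gcongr
      · omega
      · exact twoStepAscFactorial_mono_left (by omega) b

theorem add_two_mul_prod_twoStepAscFactorial_le {ι : Type*} [Fintype ι] [DecidableEq ι] (d : ℕ)
    (c : ι → ℕ) {i j : ι} (hij : i ≠ j) (hi : 0 < c i) (hj : 0 < c j) :
    (d + 2) * ∏ t, twoStepAscFactorial d (c t) ≤ d * twoStepAscFactorial d (∑ t, c t) := by
  have hsub : {i, j} ⊆ (Finset.univ : Finset ι) := Finset.subset_univ _
  rw [← Finset.prod_sdiff hsub, ← Finset.sum_sdiff hsub, Finset.prod_pair hij,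
    Finset.sum_pair hij]
  calc (d + 2) * ((∏ t ∈ Finset.univ \ {i, j}, twoStepAscFactorial d (c t)) *
        (twoStepAscFactorial d (c i) * twoStepAscFactorial d (c j)))
      = (∏ t ∈ Finset.univ \ {i, j}, twoStepAscFactorial d (c t)) *
        ((d + 2) * (twoStepAscFactorial d (c i) * twoStepAscFactorial d (c j))) := by ring
    _ ≤ twoStepAscFactorial d (∑ t ∈ Finset.univ \ {i, j}, c t) *
        (d * twoStepAscFactorial d (c i + c j)) :=
      Nat.mul_le_mul (prod_twoStepAscFactorial_le d _ c)
        (add_two_mul_twoStepAscFactorial_mul_le d hi hj)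
    _ ≤ d * twoStepAscFactorial d (∑ t ∈ Finset.univ \ {i, j}, c t + (c i + c j)) := by
      rw [mul_left_comm]
      exact Nat.mul_le_mul_left _ (twoStepAscFactorial_mul_le _ _ _)

theorem chiMoment_two_mul (d k : ℕ) : chiMoment d (2 * k) = twoStepAscFactorial d k := by
  induction k with
  | zero => simp [chiMoment, twoStepAscFactorial]
  | succ k ih =>
    rw [mul_add_one, chiMoment_add_two, ih]
    simp only [twoStepAscFactorial, Finset.prod_range_succ]
    push_cast
    ring

theorem chi_moment_ratio_le_general (d m : ℕ) (dv : Fin m → ℕ)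
    (heven : ∀ i, Even (dv i))
    (htwo : ∃ i j, i ≠ j ∧ 0 < dv i ∧ 0 < dv j) :
    (∏ i, ∫ g, Real.sqrt (∑ j, g j ^ 2) ^ dv i ∂(stdGaussian d)) /
        (∫ g, Real.sqrt (∑ j, g j ^ 2) ^ (∑ i, dv i) ∂(stdGaussian d)) ≤
      (d : ℝ) / ((d : ℝ) + 2) := by
  obtain ⟨i, j, hij, hi, hj⟩ := htwo
  choose c hc using heven
  obtain rfl : dv = fun t => 2 * c t := funext fun t => (hc t).trans (two_mul _).symm
  change (∏ t, chiMoment d (2 * c t)) / chiMoment d (∑ t, 2 * c t) ≤ _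
  rw [← Finset.mul_sum]
  simp only [chiMoment_two_mul, ← Nat.cast_prod]
  have key : ((d : ℝ) + 2) * (∏ t, twoStepAscFactorial d (c t) : ℕ) ≤
      d * twoStepAscFactorial d (∑ t, c t) := by
    exact_mod_cast add_two_mul_prod_twoStepAscFactorial_le d c hij (by simpa using hi)
      (by simpa using hj)
  -- The denominator vanishes exactly when `d = 0`; then both sides are `0` since `x / 0 = 0`.
  rcases Nat.eq_zero_or_pos (twoStepAscFactorial d (∑ t, c t)) with h0 | hpos
  · rw [h0, Nat.cast_zero, div_zero]
    positivity
  · rw [div_le_div_iff₀ (by exact_mod_cast hpos) (by positivity)]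
    linarith

/-- Let `μ_d(j) = E[‖g‖^j]` for `g ~ N(0, I_d)` (the `j`-th moment of the chi distribution
with `d` degrees of freedom). If `d₁, ..., d_m` are even naturals with at least two distinct
indices `i ≠ j` satisfying `dᵢ, dⱼ > 0`, then
`(∏ᵢ μ_d(dᵢ)) / μ_d(∑ᵢ dᵢ) ≤ d/(d+2)`. -/
theorem chi_moment_ratio_le (d m : ℕ) (hd : 1 ≤ d) (dv : Fin m → ℕ)
    (heven : ∀ i, Even (dv i))
    (htwo : ∃ i j, i ≠ j ∧ 0 < dv i ∧ 0 < dv j) :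
    (∏ i, ∫ g, Real.sqrt (∑ j, g j ^ 2) ^ dv i ∂(stdGaussian d)) /
        (∫ g, Real.sqrt (∑ j, g j ^ 2) ^ (∑ i, dv i) ∂(stdGaussian d)) ≤
      (d : ℝ) / ((d : ℝ) + 2) :=
  chi_moment_ratio_le_general d m dv heven htwo
end
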